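/- Let k be an algebraically closed field, G a finite abelian group with char(k) ∤ |G| acting on a noetherian k-algebra A by algebra automorphisms (with a fixed isomorphism G ≅ G^∨), and μ a normalised 2-cocycle of G with values in kˣ. Then A is strongly noetherian if and only if the cocycle twist A^{G,μ} is strongly noetherian. Here A is strongly noetherian if for every commutative noetherian k-algebra R, the ring A ⊗_k R is noetherian. -/

import Mathlib

universe u v

/-- A normalised 2-cocycle of the group `G` with values in `kˣ`. -/
def IsCocycle {G : Type*} [Group G] {k : Type*} [Field k] (μ : G → G → kˣ) : Prop :=
  (∀ g h l : G, μ g h * μ (g * h) l = μ g (h * l) * μ h l) ∧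
    (∀ g : G, μ 1 g = 1) ∧ (∀ g : G, μ g 1 = 1)

/-- The isotypic component of the `k`-algebra `A`, under the action
`ρ` of `G` by `k`-algebra automorphisms, corresponding to the character `c : G →* kˣ`. -/
def isotypic {k A G : Type*} [Field k] [Ring A] [Algebra k A] [Group G]
    (ρ : G →* (A ≃ₐ[k] A)) (c : G →* kˣ) : Submodule k A where
  carrier := {a | ∀ h : G, ρ h a = (c h : k) • a}
  add_mem' := fun {a} {b} ha hb h => by rw [map_add, ha h, hb h, smul_add]
  zero_mem' := fun h => by rw [map_zero, smul_zero]
  smul_mem' := fun r a ha h => by rw [map_smul, ha h, smul_comm]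

/-- Given an action `ρ` of a finite abelian group `G` on `A` by `k`-algebra automorphisms
and a fixed isomorphism `χ : G ≅ G^∨` of `G` with its character group, the `G`-grading of
`A` induced by the action: `A_g` is the isotypic component of the character `χ_{g⁻¹}`. -/
def actionGrading {k A G : Type*} [Field k] [Ring A] [Algebra k A] [Group G]
    (ρ : G →* (A ≃ₐ[k] A)) (χ : G ≃* (G →* kˣ)) : G → Submodule k A :=
  fun g => isotypic ρ (χ g⁻¹)

/-- `f : A ≃ₗ[k] B` realises the `k`-algebra `B` as the cocycle twist `A^{G,μ}` of `A`,
with respect to the `G`-grading `ℬ` of `A` and the 2-cocycle `μ`: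
`f` is a `k`-linear isomorphism with `f 1 = 1` and
`f a * f b = μ g h • f (a * b)` for all homogeneous `a ∈ A_g`, `b ∈ A_h`. -/
structure IsCocycleTwist (k : Type*) [Field k] {G : Type*} [Group G]
    {A : Type*} [Ring A] [Algebra k A] {B : Type*} [Ring B] [Algebra k B]
    (ℬ : G → Submodule k A) (μ : G → G → kˣ) (f : A ≃ₗ[k] B) : Prop where
  map_one : f 1 = 1
  map_mul : ∀ (g h : G) (a b : A), a ∈ ℬ g → b ∈ ℬ h →
    f a * f b = (μ g h : k) • f (a * b)

open scoped TensorProduct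

/-- A ring is noetherian (on both sides): noetherian as a left module and as a right
module over itself. -/
def IsNoetherianRingBoth (S : Type*) [Ring S] : Prop :=
  IsNoetherianRing S ∧ IsNoetherianRing Sᵐᵒᵖ

/-- A noetherian `k`-algebra `S` is strongly noetherian if `S ⊗_k R` is noetherian for
every commutative noetherian `k`-algebra `R`. -/
def IsStronglyNoetherian (k : Type u) [Field k] (S : Type u) [Ring S] [Algebra k S] : Prop :=
  ∀ (R : Type u) [CommRing R] [Algebra k R], IsNoetherianRing R →
    IsNoetherianRingBoth (S ⊗[k] R)

/-!
The action of `G` splits `A` into the eigenspaces `A_g` of the characters `χ_{g⁻¹}` (the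
characters separate the points of `G` because `k` is algebraically closed and `|G|` is
invertible in `k`). This grading extends to `A ⊗ R`, and `B ⊗ R` is the twist of `A ⊗ R` by
`μ`, just as `A ⊗ R` is the twist of `B ⊗ R` by `μ⁻¹`. So it suffices to show that a twist
`T'` of a left noetherian `G`-graded algebra `T` is left noetherian; the right-hand version
follows on passing to opposite algebras, where `T'ᵐᵒᵖ` is the twist of `Tᵐᵒᵖ` by the
transposed cocycle.

Writing `t_g` for the components of `t ∈ T'` read in `T`, the map
`θ t = (μ(pq⁻¹, q) t_{pq⁻¹})_{p,q}` sends `T'` into the matrix ring `M_G(T)`, which is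
noetherian. The averaging map `φ X = |G|⁻¹ Σ_{p,q} μ(pq⁻¹, q)⁻¹ (X_{p,q})_{pq⁻¹}` satisfies
`φ (θ t) = t`, and the cocycle identity gives `φ (X θ t) = φ X * t`. Hence `J ↦ M_G(T) θ(J)`
embeds the lattice of left ideals of `T'` into that of `M_G(T)`.
-/

open Finset

theorem isNoetherianRing_of_retraction {S T : Type*} [Ring S] [Ring T] [IsNoetherianRing S]
    (θ : T → S) (φ : S →+ T) (hφθ : ∀ t, φ (θ t) = t) (hφ : ∀ X t, φ (X * θ t) = φ X * t) :
    IsNoetherianRing T := by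
  have mem_of_mem_span {J : Submodule T T} {t : T}
      (ht : θ t ∈ Submodule.span S (θ '' J)) : t ∈ J := by
    obtain ⟨s, hsJ, c, hc⟩ := (Submodule.mem_span_image_iff_exists_fun S).1 ht
    rw [← hφθ t, ← hc, map_sum]
    exact J.sum_mem fun i _ => by
      rw [smul_eq_mul, hφ]
      exact J.smul_mem _ (hsJ i.2)
  let E : Submodule T T ↪o Submodule S S :=
    OrderEmbedding.ofMapLEIff (fun J => Submodule.span S (θ '' J)) fun _ _ =>
      ⟨fun h _ hj => mem_of_mem_span (h (Submodule.subset_span ⟨_, hj, rfl⟩)),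
        fun h => Submodule.span_mono (Set.image_mono h)⟩
  exact isNoetherian_mk E.strictMono.wellFoundedGT

section Cocycle

variable {k G : Type*} [Field k] [Group G] {μ : G → G → kˣ}

theorem IsCocycle.inv_mul_eq_inv_mul (hμ : IsCocycle μ) (a b c : G) :
    (μ (a * b) c : k)⁻¹ * μ b c = (μ a (b * c) : k)⁻¹ * μ a b := by
  have h : (μ a b * μ (a * b) c : k) = μ a (b * c) * μ b c := by exact_mod_cast hμ.1 a b c
  field_simp
  linear_combination -h

theorem IsCocycle.inv (hμ : IsCocycle μ) : IsCocycle fun g h => (μ g h)⁻¹ :=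
  ⟨fun g h l => by simp only [← mul_inv, hμ.1 g h l], fun g => by simp [hμ.2.1 g],
    fun g => by simp [hμ.2.2 g]⟩

end Cocycle

theorem IsCocycle.swap {k G : Type*} [Field k] [CommGroup G] {μ : G → G → kˣ}
    (hμ : IsCocycle μ) : IsCocycle fun g h => μ h g := by
  refine ⟨fun g h l => ?_, hμ.2.2, hμ.2.1⟩
  show μ h g * μ l (g * h) = μ (h * l) g * μ l h
  rw [mul_comm g h, mul_comm h l, mul_comm (μ h g), mul_comm (μ (l * h) g)]
  exact (hμ.1 l h g).symm

section CocycleTwist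

variable {k G T T' : Type*} [Field k] [Group G] [Ring T] [Algebra k T] [Ring T'] [Algebra k T']
  {π : G → T →ₗ[k] T} {μ : G → G → kˣ} {f : T ≃ₗ[k] T'}

theorem IsCocycleTwist.mono {ℬ ℬ' : G → Submodule k T} (hf : IsCocycleTwist k ℬ μ f)
    (hle : ∀ g, ℬ' g ≤ ℬ g) : IsCocycleTwist k ℬ' μ f :=
  ⟨hf.map_one, fun g h a b ha hb => hf.map_mul g h a b (hle g ha) (hle h hb)⟩

theorem IsCocycleTwist.symm (hf : IsCocycleTwist k (fun g => LinearMap.range (π g)) μ f) :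
    IsCocycleTwist k (fun g => LinearMap.range (f.conj (π g))) (fun g h => (μ g h)⁻¹) f.symm where
  map_one := by rw [← hf.map_one, LinearEquiv.symm_apply_apply]
  map_mul := by
    rintro g h _ _ ⟨x, rfl⟩ ⟨y, rfl⟩
    simp only [LinearEquiv.conj_apply_apply, LinearEquiv.symm_apply_apply]
    rw [hf.map_mul g h _ _ (LinearMap.mem_range_self _ _) (LinearMap.mem_range_self _ _),
      map_smul, LinearEquiv.symm_apply_apply, smul_smul, Units.val_inv_eq_inv_val,
      inv_mul_cancel₀ (Units.ne_zero _), one_smul]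

open MulOpposite in
theorem IsCocycleTwist.op (hf : IsCocycleTwist k (fun g => LinearMap.range (π g)) μ f) :
    IsCocycleTwist k (fun g => LinearMap.range ((opLinearEquiv k : T ≃ₗ[k] Tᵐᵒᵖ).conj (π g)))
      (fun g h => μ h g) ((opLinearEquiv k).symm.trans (f.trans (opLinearEquiv k))) where
  map_one := by simp [hf.map_one]
  map_mul := by
    rintro g h _ _ ⟨x, rfl⟩ ⟨y, rfl⟩
    simp only [LinearEquiv.trans_apply, LinearEquiv.conj_apply_apply, coe_opLinearEquiv,
      coe_opLinearEquiv_symm, unop_op, ← op_mul, ← op_smul]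
    rw [hf.map_mul h g _ _ (LinearMap.mem_range_self _ _) (LinearMap.mem_range_self _ _)]

theorem IsCocycleTwist.rTensor (R : Type*) [Ring R] [Algebra k R]
    (hf : IsCocycleTwist k (fun g => LinearMap.range (π g)) μ f) :
    IsCocycleTwist k (fun g => LinearMap.range ((π g).rTensor R)) μ
      (TensorProduct.congr f (LinearEquiv.refl k R)) where
  map_one := by
    rw [Algebra.TensorProduct.one_def, TensorProduct.congr_tmul, hf.map_one]
    rfl
  map_mul := by
    rintro g h _ _ ⟨x, rfl⟩ ⟨y, rfl⟩
    induction x using TensorProduct.induction_on with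
    | zero => simp
    | tmul a r =>
      induction y using TensorProduct.induction_on with
      | zero => simp
      | tmul b s =>
        simp only [LinearMap.rTensor_tmul, TensorProduct.congr_tmul,
          Algebra.TensorProduct.tmul_mul_tmul, LinearEquiv.refl_apply,
          hf.map_mul g h _ _ (LinearMap.mem_range_self _ _) (LinearMap.mem_range_self _ _),
          TensorProduct.smul_tmul']
      | add y y' hy hy' => simp only [map_add, mul_add, smul_add, hy, hy']
    | add x x' hx hx' => simp only [map_add, add_mul, smul_add, hx, hx']

end CocycleTwist

section GradedTwist

variable {k G T T' : Type*} [Field k] [CommGroup G] [Fintype G]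
  [Ring T] [Algebra k T] [Ring T'] [Algebra k T']

variable (π : G → T →ₗ[k] T) (μ : G → G → kˣ) (f : T ≃ₗ[k] T')

noncomputable def twistEmbedding (t : T') : Matrix G G T :=
  Matrix.of fun p q => (μ (p * q⁻¹) q : k) • π (p * q⁻¹) (f.symm t)

noncomputable def twistTrace : Matrix G G T →+ T where
  toFun X := ∑ p, ∑ q, (μ (p * q⁻¹) q : k)⁻¹ • π (p * q⁻¹) (X p q)
  map_zero' := by simp
  map_add' X Y := by simp only [Matrix.add_apply, map_add, smul_add, sum_add_distrib]

variable [DecidableEq G]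

structure IsGradingProjection : Prop where
  sum_apply : ∀ x, ∑ g, π g x = x
  proj_proj : ∀ g h x, π g (π h x) = if g = h then π h x else 0
  proj_mul_proj : ∀ g h l x y, π l (π g x * π h y) = if l = g * h then π g x * π h y else 0

variable {π μ f}

namespace IsGradingProjection

theorem proj_mul_right (hπ : IsGradingProjection π) (l h : G) (x y : T) :
    π l (y * π h x) = π (l * h⁻¹) y * π h x := by
  have hdeg (g : G) : l = g * h ↔ g = l * h⁻¹ := by rw [eq_mul_inv_iff_mul_eq, eq_comm]
  conv_lhs => rw [← hπ.sum_apply y]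
  simp only [Finset.sum_mul, map_sum, hπ.proj_mul_proj, hdeg, sum_ite_eq', mem_univ, if_true]

theorem conj (hπ : IsGradingProjection π)
    (hf : IsCocycleTwist k (fun g => LinearMap.range (π g)) μ f) :
    IsGradingProjection fun g => f.conj (π g) where
  sum_apply x := by
    simp only [LinearEquiv.conj_apply_apply, ← map_sum, hπ.sum_apply, LinearEquiv.apply_symm_apply]
  proj_proj g h x := by
    simp only [LinearEquiv.conj_apply_apply, LinearEquiv.symm_apply_apply, hπ.proj_proj]
    split_ifs <;> simp
  proj_mul_proj g h l x y := by
    simp only [LinearEquiv.conj_apply_apply]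
    rw [hf.map_mul g h _ _ (LinearMap.mem_range_self _ _) (LinearMap.mem_range_self _ _),
      map_smul, LinearEquiv.symm_apply_apply, map_smul, hπ.proj_mul_proj]
    split_ifs <;> simp

open MulOpposite in
theorem op (hπ : IsGradingProjection π) :
    IsGradingProjection fun g => (opLinearEquiv k : T ≃ₗ[k] Tᵐᵒᵖ).conj (π g) where
  sum_apply x := by simp [LinearEquiv.conj_apply_apply, ← op_sum, hπ.sum_apply]
  proj_proj g h x := by
    simp only [LinearEquiv.conj_apply_apply, coe_opLinearEquiv, coe_opLinearEquiv_symm, unop_op,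
      hπ.proj_proj]
    split_ifs <;> rfl
  proj_mul_proj g h l x y := by
    simp only [LinearEquiv.conj_apply_apply, coe_opLinearEquiv, coe_opLinearEquiv_symm, unop_op,
      unop_mul, hπ.proj_mul_proj, mul_comm h g]
    split_ifs <;> rfl

theorem rTensor (R : Type*) [Ring R] [Algebra k R] (hπ : IsGradingProjection π) :
    IsGradingProjection fun g => (π g).rTensor R where
  sum_apply x := by
    induction x using TensorProduct.induction_on with
    | zero => simp
    | tmul a r => simp only [LinearMap.rTensor_tmul, ← TensorProduct.sum_tmul, hπ.sum_apply]
    | add x y hx hy => simp only [map_add, sum_add_distrib, hx, hy]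
  proj_proj g h x := by
    induction x using TensorProduct.induction_on with
    | zero => simp
    | tmul a r => simp only [LinearMap.rTensor_tmul, hπ.proj_proj]; split_ifs <;> simp
    | add x y hx hy => simp only [map_add, hx, hy]; split_ifs <;> simp
  proj_mul_proj g h l x y := by
    induction x using TensorProduct.induction_on with
    | zero => simp
    | tmul a r =>
      induction y using TensorProduct.induction_on with
      | zero => simp
      | tmul b s =>
        simp only [LinearMap.rTensor_tmul, Algebra.TensorProduct.tmul_mul_tmul, hπ.proj_mul_proj]
        split_ifs <;> simp
      | add y y' hy hy' => simp only [map_add, mul_add, hy, hy']; split_ifs <;> simp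
    | add x x' hx hx' => simp only [map_add, add_mul, hx, hx']; split_ifs <;> simp

end IsGradingProjection

theorem IsCocycleTwist.map_proj_mul (hπ : IsGradingProjection π)
    (hf : IsCocycleTwist k (fun g => LinearMap.range (π g)) μ f) (g : G) (x : T) (j : T') :
    f (π g x) * j = f (∑ m, (μ g m : k) • (π g x * π m (f.symm j))) := by
  conv_lhs => rw [← f.apply_symm_apply j, ← hπ.sum_apply (f.symm j)]
  simp only [map_sum, map_smul, Finset.mul_sum]
  exact Finset.sum_congr rfl fun m _ =>
    hf.map_mul g m _ _ (LinearMap.mem_range_self _ _) (LinearMap.mem_range_self _ _)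

theorem twistTrace_twistEmbedding (hπ : IsGradingProjection π) (t : T') :
    twistTrace π μ (twistEmbedding π μ f t) = Fintype.card G • f.symm t := by
  have hcolumn (q : G) :
      ∑ p, (μ (p * q⁻¹) q : k)⁻¹ • π (p * q⁻¹) (twistEmbedding π μ f t p q) = f.symm t := by
    simp only [twistEmbedding, Matrix.of_apply, map_smul, hπ.proj_proj, if_true, smul_smul,
      inv_mul_cancel₀ (Units.ne_zero _), one_smul]
    conv_rhs => rw [← hπ.sum_apply (f.symm t)]
    exact Fintype.sum_equiv (Equiv.mulRight q⁻¹) _ _ fun p => rfl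
  simp only [twistTrace, AddMonoidHom.coe_mk, ZeroHom.coe_mk]
  rw [Finset.sum_comm, Finset.sum_congr rfl fun q _ => hcolumn q, Finset.sum_const, card_univ]

theorem twistTrace_mul_twistEmbedding (hπ : IsGradingProjection π) (hμ : IsCocycle μ)
    (X : Matrix G G T) (j : T') :
    twistTrace π μ (X * twistEmbedding π μ f j) =
      ∑ p, ∑ r, ∑ m, ((μ (p * r⁻¹) r : k)⁻¹ * μ (p * r⁻¹) m) •
        (π (p * r⁻¹) (X p r) * π m (f.symm j)) := by
  have hdeg (p q r : G) : p * q⁻¹ * (r * q⁻¹)⁻¹ = p * r⁻¹ := by group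
  simp only [twistTrace, AddMonoidHom.coe_mk, ZeroHom.coe_mk, Matrix.mul_apply,
    twistEmbedding, Matrix.of_apply, mul_smul_comm, map_sum, map_smul, hπ.proj_mul_right, hdeg,
    smul_sum, smul_smul]
  refine Finset.sum_congr rfl fun p _ => ?_
  rw [Finset.sum_comm]
  refine Finset.sum_congr rfl fun r _ => ?_
  refine Fintype.sum_equiv ((Equiv.inv G).trans (Equiv.mulLeft r)) _ _ fun q => ?_
  have hq : r * q⁻¹ * q = r := by group
  have hc := hμ.inv_mul_eq_inv_mul (p * r⁻¹) (r * q⁻¹) q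
  simp only [Equiv.trans_apply, Equiv.inv_apply, Equiv.coe_mulLeft, hq, mul_assoc,
    inv_mul_cancel_left] at hc ⊢
  rw [hc]

theorem map_twistTrace_mul_twistEmbedding (hπ : IsGradingProjection π) (hμ : IsCocycle μ)
    (hf : IsCocycleTwist k (fun g => LinearMap.range (π g)) μ f) (X : Matrix G G T) (j : T') :
    f (twistTrace π μ (X * twistEmbedding π μ f j)) = f (twistTrace π μ X) * j := by
  rw [twistTrace_mul_twistEmbedding hπ hμ]
  simp only [twistTrace, AddMonoidHom.coe_mk, ZeroHom.coe_mk, map_smul, map_sum,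
    smul_mul_assoc, sum_mul, hf.map_proj_mul hπ, smul_sum, smul_smul]

theorem IsCocycleTwist.isNoetherianRing (hN : (Fintype.card G : k) ≠ 0)
    (hπ : IsGradingProjection π) (hμ : IsCocycle μ)
    (hf : IsCocycleTwist k (fun g => LinearMap.range (π g)) μ f) [IsNoetherianRing T] :
    IsNoetherianRing T' :=
  isNoetherianRing_of_retraction (twistEmbedding π μ f)
    (((Fintype.card G : k)⁻¹ • f.toLinearMap).toAddMonoidHom.comp (twistTrace π μ))
    (fun t => by
      simp [twistTrace_twistEmbedding hπ, ← Nat.cast_smul_eq_nsmul k, smul_smul,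
        inv_mul_cancel₀ hN])
    (fun X t => by simp [map_twistTrace_mul_twistEmbedding hπ hμ hf])

theorem IsCocycleTwist.isNoetherianRingBoth (hN : (Fintype.card G : k) ≠ 0)
    (hπ : IsGradingProjection π) (hμ : IsCocycle μ)
    (hf : IsCocycleTwist k (fun g => LinearMap.range (π g)) μ f) (hT : IsNoetherianRingBoth T) :
    IsNoetherianRingBoth T' :=
  have := hT.1
  have := hT.2
  ⟨hf.isNoetherianRing hN hπ hμ, hf.op.isNoetherianRing hN hπ.op hμ.swap⟩

theorem IsCocycleTwist.isNoetherianRingBoth_iff (hN : (Fintype.card G : k) ≠ 0)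
    (hπ : IsGradingProjection π) (hμ : IsCocycle μ)
    (hf : IsCocycleTwist k (fun g => LinearMap.range (π g)) μ f) :
    IsNoetherianRingBoth T ↔ IsNoetherianRingBoth T' :=
  ⟨hf.isNoetherianRingBoth hN hπ hμ, hf.symm.isNoetherianRingBoth hN (hπ.conj hf) hμ.inv⟩

end GradedTwist

theorem sum_coe_monoidHom_units_eq_zero {k G : Type*} [Field k] [Group G] [Fintype G]
    {c : G →* kˣ} (hc : c ≠ 1) : ∑ s, (c s : k) = 0 :=
  sum_hom_units_eq_zero ((Units.coeHom k).comp c) fun h =>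
    hc (MonoidHom.ext fun s => Units.ext (DFunLike.congr_fun h s))

section ActionGrading

variable {k G A : Type*} [Field k] [CommGroup G] [Ring A] [Algebra k A]
  (ρ : G →* (A ≃ₐ[k] A)) (χ : G ≃* (G →* kˣ))

theorem isotypic_mul_mem {c c' : G →* kˣ} {a b : A} (ha : a ∈ isotypic ρ c)
    (hb : b ∈ isotypic ρ c') : a * b ∈ isotypic ρ (c * c') := fun s => by
  rw [map_mul, ha s, hb s, smul_mul_smul_comm, MonoidHom.mul_apply, Units.val_mul]

theorem actionGrading_mul_mem {g h : G} {a b : A} (ha : a ∈ actionGrading ρ χ g)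
    (hb : b ∈ actionGrading ρ χ h) : a * b ∈ actionGrading ρ χ (g * h) := by
  simpa [actionGrading, mul_comm g h, map_mul] using isotypic_mul_mem ρ ha hb

variable [Fintype G]

theorem eq_one_of_forall_dual_apply_eq_one [IsAlgClosed k] (hN : (Fintype.card G : k) ≠ 0)
    {s : G} (hs : ∀ g, χ g s = 1) : s = 1 := by
  have : NeZero (Monoid.exponent G : k) := ⟨fun h0 => hN <| by
    obtain ⟨m, hm⟩ := Group.exponent_dvd_card (G := G)
    rw [hm, Nat.cast_mul, h0, zero_mul]⟩
  refine (CommGroup.forall_apply_eq_apply_iff G (M := k)).1 fun c => ?_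
  simpa using hs (χ.symm c)

noncomputable def actionGradingProj (g : G) : A →ₗ[k] A :=
  (Fintype.card G : k)⁻¹ • ∑ s, (χ g s : k) • (ρ s).toLinearMap

theorem actionGradingProj_apply (g : G) (x : A) :
    actionGradingProj ρ χ g x = (Fintype.card G : k)⁻¹ • ∑ s, (χ g s : k) • ρ s x := by
  simp [actionGradingProj]

theorem actionGradingProj_mem (g : G) (x : A) :
    actionGradingProj ρ χ g x ∈ actionGrading ρ χ g := fun s => by
  have hcoeff (t : G) : (χ g⁻¹ s : k) * χ g (s * t) = χ g t := by
    rw [← Units.val_mul, map_inv, MonoidHom.inv_apply, map_mul, inv_mul_cancel_left]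
  have hsum : ρ s (∑ t, (χ g t : k) • ρ t x) = (χ g⁻¹ s : k) • ∑ t, (χ g t : k) • ρ t x := by
    rw [map_sum, Finset.smul_sum]
    refine Fintype.sum_equiv (Equiv.mulLeft s) _ _ fun t => ?_
    rw [Equiv.coe_mulLeft, map_smul, smul_smul, hcoeff, map_mul, AlgEquiv.mul_apply]
  rw [actionGradingProj_apply, map_smul, hsum, smul_comm]

theorem range_actionGradingProj_le (g : G) :
    LinearMap.range (actionGradingProj ρ χ g) ≤ actionGrading ρ χ g := by
  rintro _ ⟨x, rfl⟩
  exact actionGradingProj_mem ρ χ g x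

variable [DecidableEq G]

theorem actionGradingProj_of_mem (hN : (Fintype.card G : k) ≠ 0) (g : G) {h : G} {a : A}
    (ha : a ∈ actionGrading ρ χ h) : actionGradingProj ρ χ g a = if g = h then a else 0 := by
  have hterm (s : G) : (χ g s : k) • ρ s a = (χ (g * h⁻¹) s : k) • a := by
    rw [ha s, smul_smul, map_mul, map_inv, MonoidHom.mul_apply, Units.val_mul]
  rw [actionGradingProj_apply, Finset.sum_congr rfl fun s _ => hterm s, ← sum_smul]
  split_ifs with hgh
  · simp [hgh, hN]
  · rw [sum_coe_monoidHom_units_eq_zero, zero_smul, smul_zero]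
    rwa [Ne, map_eq_one_iff χ χ.injective, mul_inv_eq_one]

theorem sum_actionGradingProj [IsAlgClosed k] (hN : (Fintype.card G : k) ≠ 0) (x : A) :
    ∑ g, actionGradingProj ρ χ g x = x := by
  have hdual (s : G) : ∑ g, (χ g s : k) = if s = 1 then (Fintype.card G : k) else 0 := by
    split_ifs with hs
    · simp [hs]
    · refine sum_coe_monoidHom_units_eq_zero (c := (MonoidHom.eval s).comp χ.toMonoidHom) ?_
      exact fun h => hs (eq_one_of_forall_dual_apply_eq_one χ hN fun g => DFunLike.congr_fun h g)
  simp only [actionGradingProj_apply, ← smul_sum]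
  rw [Finset.sum_comm]
  simp only [← sum_smul, hdual, ite_smul, zero_smul, sum_ite_eq', mem_univ, if_true, map_one,
    AlgEquiv.one_apply, smul_smul, inv_mul_cancel₀ hN, one_smul]

theorem isGradingProjection_actionGradingProj [IsAlgClosed k]
    (hN : (Fintype.card G : k) ≠ 0) : IsGradingProjection (actionGradingProj ρ χ) where
  sum_apply := sum_actionGradingProj ρ χ hN
  proj_proj g h x := actionGradingProj_of_mem ρ χ hN g (actionGradingProj_mem ρ χ h x)
  proj_mul_proj g h l x y := actionGradingProj_of_mem ρ χ hN l
    (actionGrading_mul_mem ρ χ (actionGradingProj_mem ρ χ g x) (actionGradingProj_mem ρ χ h y))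

end ActionGrading

theorem statement12_general {k A B G : Type u} [Field k] [IsAlgClosed k] [Ring A] [Algebra k A]
    [Ring B] [Algebra k B] [CommGroup G] [Fintype G] [DecidableEq G]
    (hchar : (Fintype.card G : k) ≠ 0)
    (ρ : G →* (A ≃ₐ[k] A)) (χ : G ≃* (G →* kˣ))
    (μ : G → G → kˣ) (hμ : IsCocycle μ)
    (f : A ≃ₗ[k] B) (hf : IsCocycleTwist k (actionGrading ρ χ) μ f) :
    IsStronglyNoetherian k A ↔ IsStronglyNoetherian k B := by
  have hπ := isGradingProjection_actionGradingProj ρ χ hchar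
  have hfπ := hf.mono (range_actionGradingProj_le ρ χ)
  have htensor (R : Type u) [CommRing R] [Algebra k R] :
      IsNoetherianRingBoth (A ⊗[k] R) ↔ IsNoetherianRingBoth (B ⊗[k] R) :=
    (hfπ.rTensor R).isNoetherianRingBoth_iff hchar (hπ.rTensor R) hμ
  exact ⟨fun hA R _ _ hR => (htensor R).1 (hA R hR), fun hB R _ _ hR => (htensor R).2 (hB R hR)⟩

/-- Under the standing hypotheses (`k` algebraically closed, `G` finite
abelian with `char k ∤ |G|` acting on the noetherian `k`-algebra `A` by algebra
automorphisms, `χ : G ≅ G^∨` fixed, `μ` a normalised 2-cocycle), `A` is strongly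
noetherian if and only if the cocycle twist `A^{G,μ}` (here `B`, via `f`) is. -/
theorem statement12 {k A B G : Type u} [Field k] [IsAlgClosed k] [Ring A] [Algebra k A]
    [Ring B] [Algebra k B] [CommGroup G] [Fintype G] [DecidableEq G]
    (hchar : (Fintype.card G : k) ≠ 0)
    (ρ : G →* (A ≃ₐ[k] A)) (χ : G ≃* (G →* kˣ))
    (μ : G → G → kˣ) (hμ : IsCocycle μ)
    (hA : IsNoetherianRingBoth A)
    (f : A ≃ₗ[k] B) (hf : IsCocycleTwist k (actionGrading ρ χ) μ f) :
    IsStronglyNoetherian k A ↔ IsStronglyNoetherian k B :=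
  statement12_general hchar ρ χ μ hμ f hf
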